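/- arXiv:2303.02791 — 2 statements merged into one kernel-verified Lean document; each statement's English description precedes it below -/
import Mathlib

section
/- Let G be a finite simple graph with edge set E(G) = {e_1,...,e_r} and let s be an integer with 1 ≤ s ≤ match(G). Suppose u = e_{i_1}⋯e_{i_s} is a minimal monomial generator of I(G)^[s] (so {e_{i_1},...,e_{i_s}} is a matching of G). Then (I(G)^{s+1} : u) = ( (I(G)^{2} : e_{i_1})^{s} : e_{i_2}⋯e_{i_s} ), where for a squarefree monomial ideal J, J^{s} denotes the squarefree part of its s-th symbolic power. -/
open MvPolynomial

noncomputable section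

/-! Generalities on graded pieces, Betti numbers and Castelnuovo–Mumford regularity
of homogeneous ideals in a polynomial ring, via the Koszul complex. -/

variable (K : Type) [Field K] (n : ℕ)

/-- The degree `d` graded piece of an ideal `I ⊆ K[x_1, …, x_n]`, as a `K`-subspace
(`⊥` for negative `d`). -/
def degPiece (I : Ideal (MvPolynomial (Fin n) K)) (d : ℤ) :
    Submodule K (MvPolynomial (Fin n) K) :=
  if 0 ≤ d then (Submodule.restrictScalars K I) ⊓ homogeneousSubmodule (Fin n) K d.toNat
  else ⊥

theorem mulX_mem (I : Ideal (MvPolynomial (Fin n) K)) (k : Fin n) (d : ℤ)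
    {x : MvPolynomial (Fin n) K} (hx : x ∈ degPiece K n I d) :
    (X k : MvPolynomial (Fin n) K) * x ∈ degPiece K n I (d + 1) := by
  by_cases h : 0 ≤ d
  · rw [degPiece, if_pos h, Submodule.mem_inf] at hx
    rw [degPiece, if_pos (by omega : (0:ℤ) ≤ d + 1), Submodule.mem_inf]
    constructor
    · exact Ideal.mul_mem_left I _ hx.1
    · rw [mem_homogeneousSubmodule]
      have h2 := (isHomogeneous_X K k).mul ((mem_homogeneousSubmodule _ _).1 hx.2)
      have h3 : (d + 1).toNat = 1 + d.toNat := by omega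
      rw [h3]
      exact h2
  · rw [degPiece, if_neg h, Submodule.mem_bot] at hx
    subst hx
    rw [mul_zero]
    exact Submodule.zero_mem _

/-- Multiplication by the variable `x_k`, as a map between graded pieces. -/
def mulXmap (I : Ideal (MvPolynomial (Fin n) K)) (k : Fin n) (d e : ℤ) (h : e = d + 1) :
    degPiece K n I d →ₗ[K] degPiece K n I e :=
  LinearMap.restrict (LinearMap.mulLeft K (X k)) (by
    intro x hx
    subst h
    simpa using mulX_mem K n I k d hx)

/-- The differential, in internal degree `j`, of the complex obtained by tensoring the
ideal `I` with the Koszul complex on `x_1, …, x_n`; its homology computes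
`Tor_i(I, K)_j`, whose dimension is the graded Betti number `β_{i,j}(I)`. -/
def koszulD (I : Ideal (MvPolynomial (Fin n) K)) (j i : ℕ) :
    ({T : Finset (Fin n) // T.card = i + 1} → degPiece K n I ((j : ℤ) - (i + 1)))
      →ₗ[K] ({T : Finset (Fin n) // T.card = i} → degPiece K n I ((j : ℤ) - i)) :=
  LinearMap.pi fun T => ∑ k : Fin n,
    if h : k ∈ T.1 then 0
    else ((-1 : K) ^ (T.1.filter (fun l => l < k)).card) •
      ((mulXmap K n I k ((j : ℤ) - (i + 1)) ((j : ℤ) - i) (by ring)).comp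
        (LinearMap.proj (⟨insert k T.1, by
          rw [Finset.card_insert_of_notMem h, T.2]⟩ : {T : Finset (Fin n) // T.card = i + 1})))

/-- The cycles of the (internal degree `j`) Koszul complex of `I` in homological degree `i`. -/
def kerChain (I : Ideal (MvPolynomial (Fin n) K)) (j : ℕ) :
    (i : ℕ) → Submodule K ({T : Finset (Fin n) // T.card = i} → degPiece K n I ((j : ℤ) - i))
  | 0 => ⊤
  | (i + 1) => LinearMap.ker (koszulD K n I j i)

/-- The graded Betti number `β_{i,j}(I) = dim_K Tor_i(I, K)_j`. -/
def betti (I : Ideal (MvPolynomial (Fin n) K)) (i j : ℕ) : ℕ :=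
  Module.finrank K (kerChain K n I j i) -
    Module.finrank K
      ((LinearMap.range (koszulD K n I j i) ⊓ kerChain K n I j i) : Submodule K _)

/-- The Castelnuovo–Mumford regularity `reg(I) = max { j - i | β_{i,j}(I) ≠ 0 }`. -/
def reg (I : Ideal (MvPolynomial (Fin n) K)) : ℤ :=
  sSup {r : ℤ | ∃ i j : ℕ, betti K n I i j ≠ 0 ∧ r = (j : ℤ) - i}

/-- The squarefree part of a monomial ideal: the ideal generated by the squarefree
monomials belonging to it. -/
def sqfreePart (I : Ideal (MvPolynomial (Fin n) K)) : Ideal (MvPolynomial (Fin n) K) :=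
  Ideal.span {m | m ∈ I ∧ ∃ A : Finset (Fin n), m = ∏ v ∈ A, X v}

/-- The `s`-th symbolic power of a (squarefree monomial) ideal:
the intersection of the `s`-th powers of its minimal primes; `S` for `s ≤ 0`. -/
def symbPow (I : Ideal (MvPolynomial (Fin n) K)) (s : ℤ) : Ideal (MvPolynomial (Fin n) K) :=
  if s ≤ 0 then ⊤ else ⨅ p ∈ I.minimalPrimes, p ^ s.toNat

/-- `ssp I s` is `I^{s}`, the squarefree part of the `s`-th symbolic power of `I`. -/
def ssp (I : Ideal (MvPolynomial (Fin n) K)) (s : ℤ) : Ideal (MvPolynomial (Fin n) K) :=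
  sqfreePart K n (symbPow K n I s)

/-- `sqPow I s` is `I^[s]`, the squarefree part of the ordinary power `I^s`. -/
def sqPow (I : Ideal (MvPolynomial (Fin n) K)) (s : ℕ) : Ideal (MvPolynomial (Fin n) K) :=
  sqfreePart K n (I ^ s)

/-- The height of an ideal: the minimum of the heights of its minimal primes. -/
def heightI (I : Ideal (MvPolynomial (Fin n) K)) : ℕ∞ :=
  ⨅ p : I.minimalPrimes, Order.height (⟨p.1, p.2.1.1⟩ : PrimeSpectrum (MvPolynomial (Fin n) K))

/-- The colon ideal `(I : u)`. -/
def colonOf (I : Ideal (MvPolynomial (Fin n) K)) (u : MvPolynomial (Fin n) K) :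
    Ideal (MvPolynomial (Fin n) K) :=
  Submodule.colon I (Ideal.span {u})

/-- `u` is a minimal monomial generator of the monomial ideal `I`:
`u` is a monomial belonging to `I` and `u/x_k ∉ I` for every variable `x_k` dividing `u`. -/
def IsMinGen (I : Ideal (MvPolynomial (Fin n) K)) (u : MvPolynomial (Fin n) K) : Prop :=
  ∃ d : Fin n →₀ ℕ, u = monomial d (1 : K) ∧ u ∈ I ∧
    ∀ k : Fin n, d k ≠ 0 → monomial (d - Finsupp.single k 1) (1 : K) ∉ I

/-! Graph-theoretic notions. -/

/-- The graph obtained from `G` by deleting the vertices in `U` (and all edges meeting `U`),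
on the same vertex set. -/
def delVerts (G : SimpleGraph (Fin n)) (U : Set (Fin n)) : SimpleGraph (Fin n) where
  Adj v w := G.Adj v w ∧ v ∉ U ∧ w ∉ U
  symm := ⟨fun _ _ h => ⟨h.1.symm, h.2.2, h.2.1⟩⟩
  loopless := ⟨fun v h => G.loopless.irrefl v h.1⟩


/-- The edge ideal `I(G)` of a graph `G` on the vertex set `{x_1, …, x_n}`. -/
def edgeIdeal (G : SimpleGraph (Fin n)) : Ideal (MvPolynomial (Fin n) K) :=
  Ideal.span {m | ∃ v w, G.Adj v w ∧ m = X v * X w}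

/-- `a`, `b` enumerate the endpoints of a matching of `G` of size `k`:
the edges `a i b i` are pairwise disjoint edges of `G`. -/
def IsMatching (G : SimpleGraph (Fin n)) (k : ℕ) (a b : Fin k → Fin n) : Prop :=
  (∀ i, G.Adj (a i) (b i)) ∧
    ∀ i j, i ≠ j → a i ≠ a j ∧ b i ≠ b j ∧ a i ≠ b j

/-- The matching number `match(G)`. -/
def matchNum (G : SimpleGraph (Fin n)) : ℕ :=
  sSup {k | ∃ a b : Fin k → Fin n, IsMatching n G k a b}

/-- An induced matching: a matching such that no edge of `G` other than the matching edges
joins two of its vertices. -/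
def IsInducedMatching (G : SimpleGraph (Fin n)) (k : ℕ) (a b : Fin k → Fin n) : Prop :=
  IsMatching n G k a b ∧ ∀ i j, i ≠ j →
    ¬ G.Adj (a i) (a j) ∧ ¬ G.Adj (a i) (b j) ∧ ¬ G.Adj (b i) (a j) ∧ ¬ G.Adj (b i) (b j)

/-- The induced matching number `ind-match(G)`. -/
def indMatchNum (G : SimpleGraph (Fin n)) : ℕ :=
  sSup {k | ∃ a b : Fin k → Fin n, IsInducedMatching n G k a b}

/-- An ordered matching `{a_i b_i}`: the `a_i` form an independent set and
`a_i b_j ∈ E(G)` implies `i ≤ j`. -/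
def IsOrderedMatching (G : SimpleGraph (Fin n)) (k : ℕ) (a b : Fin k → Fin n) : Prop :=
  IsMatching n G k a b ∧ (∀ i j, ¬ G.Adj (a i) (a j)) ∧ ∀ i j, G.Adj (a i) (b j) → i ≤ j

/-- The ordered matching number `ord-match(G)`. -/
def ordMatchNum (G : SimpleGraph (Fin n)) : ℕ :=
  sSup {k | ∃ a b : Fin k → Fin n, IsOrderedMatching n G k a b}

/-- A graph is chordal if it has no induced cycle of length at least four. -/
def IsChordal (G : SimpleGraph (Fin n)) : Prop :=
  ∀ k : ℕ, 4 ≤ k → ∀ f : ZMod k → Fin n, Function.Injective f →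
    ¬ (∀ i j : ZMod k, G.Adj (f i) (f j) ↔ (j = i + 1 ∨ i = j + 1))


/-- The star triangle graph with `t` triangles: vertex `0` is the common vertex of all the
triangles, and for `0 ≤ i < t` the vertices `2i+1`, `2i+2` are the other two vertices of the
`i`-th triangle. -/
def starTriangle (t : ℕ) : SimpleGraph (Fin (2 * t + 1)) where
  Adj u v := u ≠ v ∧ ((u : ℕ) = 0 ∨ (v : ℕ) = 0 ∨ ((u : ℕ) - 1) / 2 = ((v : ℕ) - 1) / 2)
  symm := by
    constructor
    intro u v h
    exact ⟨h.1.symm, by tauto⟩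
  loopless := by constructor; intro u h; exact h.1 rfl

end

/-! Everything reduces to combinatorics of supports. For the ideal `I(F)` generated by the
squarefree monomials `x_B`, `B ∈ F`, every minimal prime is `(x_v : v ∈ D)` for a transversal `D`
of `F`, and `x_A ∈ (x_v : v ∈ D)^t` iff `#(A ∩ D) ≥ t`, as one sees by setting the variables
outside `D` to `1`. Hence `(I(F)^{t} : x_E)` is again generated by squarefree monomials, namely by
the `x_A` with `#((A ∪ E) ∩ D) ≥ t` for every transversal `D`.

For `F = E(G)` and `E = e_1`, the transversals of `(I(G)^{2} : e_1)` are the supersets of `C \ e_1`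
for the vertex covers `C` meeting `e_1` in a single vertex. So a cover meeting `e_1` once counts
that vertex plus exactly what the transversal `C \ e_1` counts on the other side, while a cover
meeting `e_1` twice meets the matching `e_1, …, e_s` in `s + 1` vertices anyway. -/

namespace SquarefreeMonomial

open MvPolynomial Finset

noncomputable section

variable {σ : Type*}

def sqfreeExp (A : Finset σ) : σ →₀ ℕ := ∑ v ∈ A, Finsupp.single v 1

lemma sqfreeExp_apply [DecidableEq σ] (A : Finset σ) (v : σ) :
    sqfreeExp A v = if v ∈ A then 1 else 0 := by
  simp [sqfreeExp, Finsupp.finsetSum_apply, Finsupp.single_apply]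

lemma support_sqfreeExp (A : Finset σ) : (sqfreeExp A).support = A := by
  classical
  ext v
  simp [sqfreeExp_apply]

lemma sqfreeExp_le_iff {A : Finset σ} {m : σ →₀ ℕ} : sqfreeExp A ≤ m ↔ A ⊆ m.support := by
  classical
  simp only [Finsupp.le_def, sqfreeExp_apply, subset_iff, Finsupp.mem_support_iff]
  refine ⟨fun h v hv => ?_, fun h v => ?_⟩
  · have := h v
    rw [if_pos hv] at this
    omega
  · split_ifs with hv
    · exact Nat.one_le_iff_ne_zero.2 (h hv)
    · exact Nat.zero_le _

lemma degree_sqfreeExp (A : Finset σ) : (sqfreeExp A).degree = #A := by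
  simp [sqfreeExp, map_sum, Finsupp.degree_single]

section Semiring

variable (R : Type*) [CommSemiring R]

def sqfreeMonomial (A : Finset σ) : MvPolynomial σ R := ∏ v ∈ A, X v

def varIdeal (D : Finset σ) : Ideal (MvPolynomial σ R) := Ideal.span (X '' ↑D)

def sqfreeIdeal (F : Set (Finset σ)) : Ideal (MvPolynomial σ R) :=
  Ideal.span (sqfreeMonomial R '' F)

variable {R}

lemma sqfreeMonomial_eq_monomial (A : Finset σ) :
    sqfreeMonomial R A = monomial (sqfreeExp A) 1 := by
  rw [sqfreeMonomial, sqfreeExp, monomial_sum_one]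
  rfl

lemma sqfreeMonomial_pair [DecidableEq σ] {v w : σ} (h : v ≠ w) :
    sqfreeMonomial R {v, w} = X v * X w :=
  prod_pair h

lemma sqfreeMonomial_dvd_sqfreeMonomial {A B : Finset σ} (h : A ⊆ B) :
    sqfreeMonomial R A ∣ sqfreeMonomial R B :=
  prod_dvd_prod_of_subset _ _ _ h

lemma isUpperSet_sqfreeMonomial_mem (T : Ideal (MvPolynomial σ R)) :
    IsUpperSet {A : Finset σ | sqfreeMonomial R A ∈ T} :=
  fun _ _ hAB hA => T.mem_of_dvd (sqfreeMonomial_dvd_sqfreeMonomial hAB) hA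

lemma sqfreeIdeal_eq_span_monomial (F : Set (Finset σ)) :
    sqfreeIdeal R F = Ideal.span ((fun d => monomial d (1 : R)) '' (sqfreeExp '' F)) := by
  rw [sqfreeIdeal, Set.image_image]
  simp_rw [sqfreeMonomial_eq_monomial]

lemma mem_sqfreeIdeal_iff {F : Set (Finset σ)} (hF : IsUpperSet F) {f : MvPolynomial σ R} :
    f ∈ sqfreeIdeal R F ↔ ∀ m ∈ f.support, m.support ∈ F := by
  rw [sqfreeIdeal_eq_span_monomial, mem_ideal_span_monomial_image]
  refine forall₂_congr fun m _ =>
    ⟨?_, fun h => ⟨_, ⟨_, h, rfl⟩, sqfreeExp_le_iff.2 subset_rfl⟩⟩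
  rintro ⟨_, ⟨A, hA, rfl⟩, hAm⟩
  exact hF (sqfreeExp_le_iff.1 hAm) hA

lemma support_mul_monomial_one (f : MvPolynomial σ R) (e : σ →₀ ℕ) :
    (f * monomial e 1).support = f.support.map (addRightEmbedding e) :=
  AddMonoidAlgebra.support_coeff_mul_single f 1 (by simp) e

lemma mul_sqfreeMonomial_mem_sqfreeIdeal_iff [DecidableEq σ] {F : Set (Finset σ)}
    (hF : IsUpperSet F) {f : MvPolynomial σ R} {E : Finset σ} :
    f * sqfreeMonomial R E ∈ sqfreeIdeal R F ↔ ∀ m ∈ f.support, m.support ∪ E ∈ F := by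
  simp only [mem_sqfreeIdeal_iff hF, sqfreeMonomial_eq_monomial, support_mul_monomial_one,
    mem_map, addRightEmbedding_apply, forall_exists_index, and_imp, forall_apply_eq_imp_iff₂,
    Finsupp.support_add_eq_union, support_sqfreeExp]

end Semiring

section Ring

variable {R : Type*} [CommRing R]

lemma X_mem_varIdeal_iff [Nontrivial R] {D : Finset σ} {v : σ} :
    (X v : MvPolynomial σ R) ∈ varIdeal R D ↔ v ∈ D := by
  classical
  simp [varIdeal, mem_ideal_span_X_image, support_X, Finsupp.single_apply]

lemma varIdeal_le_varIdeal_iff [Nontrivial R] {D E : Finset σ} :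
    varIdeal R D ≤ varIdeal R E ↔ D ⊆ E := by
  refine ⟨fun h v hv => X_mem_varIdeal_iff.1 (h (X_mem_varIdeal_iff.2 hv)), fun h => ?_⟩
  rw [varIdeal, Ideal.span_le]
  rintro _ ⟨v, hv, rfl⟩
  exact X_mem_varIdeal_iff.2 (h hv)

lemma isPrime_varIdeal [IsDomain R] (D : Finset σ) : (varIdeal R D).IsPrime := by
  classical
  -- killing the variables of `D` is the identity modulo `varIdeal R D`, so `varIdeal R D` is
  -- the kernel of this substitution, whose target is a domain
  let φ : MvPolynomial σ R →ₐ[R] MvPolynomial σ R := aeval fun v => if v ∈ D then 0 else X v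
  let π := Ideal.Quotient.mkₐ R (varIdeal R D)
  have hπφ : π.comp φ = π := by
    refine algHom_ext fun v => ?_
    by_cases hv : v ∈ D
    · simp only [φ, π, AlgHom.comp_apply, aeval_X, if_pos hv, map_zero]
      exact (Ideal.Quotient.eq_zero_iff_mem.2 (X_mem_varIdeal_iff.2 hv)).symm
    · simp [φ, π, hv]
  have hker : varIdeal R D = RingHom.ker φ := by
    refine le_antisymm ?_ fun f hf => ?_
    · rw [varIdeal, Ideal.span_le]
      rintro _ ⟨v, hv, rfl⟩
      simp [φ, mem_coe.1 hv]
    · have : π f = 0 := by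
        rw [← hπφ, AlgHom.comp_apply, show φ f = 0 from hf, map_zero]
      exact Ideal.Quotient.eq_zero_iff_mem.1 this
  rw [hker]
  exact RingHom.ker_isPrime _

lemma sqfreeMonomial_mem_varIdeal_pow_iff [Nontrivial R] [DecidableEq σ] {A D : Finset σ}
    {t : ℕ} : sqfreeMonomial R A ∈ varIdeal R D ^ t ↔ t ≤ #(A ∩ D) := by
  constructor
  · intro h
    -- setting the variables outside `D` to `1` maps `varIdeal R D` into the ideal of all
    -- variables and `x_A` to `x_{A ∩ D}`, whose degree `#(A ∩ D)` must then be at least `t`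
    let ψ : MvPolynomial σ R →ₐ[R] MvPolynomial σ R := aeval fun v => if v ∈ D then X v else 1
    have hψ : Ideal.map ψ (varIdeal R D) ≤ idealOfVars σ R := by
      rw [varIdeal, Ideal.map_span, Ideal.span_le]
      rintro _ ⟨_, ⟨v, hv, rfl⟩, rfl⟩
      simp only [ψ, aeval_X, if_pos (mem_coe.1 hv)]
      exact Ideal.subset_span ⟨v, rfl⟩
    have hψA : ψ (sqfreeMonomial R A) = sqfreeMonomial R (A ∩ D) := by
      simp [ψ, sqfreeMonomial, map_prod]
    have hmem := Ideal.mem_map_of_mem ψ h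
    rw [Ideal.map_pow] at hmem
    have := Ideal.pow_right_mono hψ t hmem
    rwa [hψA, sqfreeMonomial_eq_monomial, monomial_mem_pow_idealOfVars_iff _ _ one_ne_zero,
      degree_sqfreeExp] at this
  · intro h
    obtain ⟨T, hT, rfl⟩ := exists_subset_card_eq h
    refine Ideal.mem_of_dvd _ (sqfreeMonomial_dvd_sqfreeMonomial (hT.trans inter_subset_left)) ?_
    rw [sqfreeMonomial, ← prod_const]
    exact Ideal.prod_mem_prod fun v hv => X_mem_varIdeal_iff.2 (mem_inter.1 (hT hv)).2

end Ring

section Transversal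

variable [DecidableEq σ] {R : Type*} [CommRing R] {F : Set (Finset σ)}

def IsTransversal (F : Set (Finset σ)) (D : Finset σ) : Prop := ∀ B ∈ F, (B ∩ D).Nonempty

lemma IsTransversal.card_inter_pos {C E : Finset σ} (hC : IsTransversal F C) (hE : E ∈ F) :
    0 < #(C ∩ E) := by
  rw [inter_comm]
  exact card_pos.2 (hC E hE)

lemma sqfreeMonomial_mem_varIdeal_iff [Nontrivial R] {A D : Finset σ} :
    sqfreeMonomial R A ∈ varIdeal R D ↔ (A ∩ D).Nonempty := by
  simpa [card_pos] using sqfreeMonomial_mem_varIdeal_pow_iff (R := R) (A := A) (D := D) (t := 1)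

lemma sqfreeIdeal_le_varIdeal_iff [Nontrivial R] {D : Finset σ} :
    sqfreeIdeal R F ≤ varIdeal R D ↔ IsTransversal F D := by
  rw [sqfreeIdeal, Ideal.span_le, Set.image_subset_iff]
  exact forall₂_congr fun _ _ => sqfreeMonomial_mem_varIdeal_iff

lemma exists_isTransversal_varIdeal_le [Fintype σ] {q : Ideal (MvPolynomial σ R)}
    (hq : q.IsPrime) (h : sqfreeIdeal R F ≤ q) :
    ∃ D, IsTransversal F D ∧ varIdeal R D ≤ q := by
  classical
  refine ⟨univ.filter fun v => X v ∈ q, fun B hB => ?_, ?_⟩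
  · obtain ⟨v, hvB, hvq⟩ := hq.prod_mem_iff.1 (h (Ideal.subset_span ⟨B, hB, rfl⟩))
    exact ⟨v, mem_inter.2 ⟨hvB, by simpa using hvq⟩⟩
  · rw [varIdeal, Ideal.span_le]
    rintro _ ⟨v, hv, rfl⟩
    simpa using hv

lemma exists_eq_varIdeal_of_mem_minimalPrimes [Fintype σ] [IsDomain R]
    {p : Ideal (MvPolynomial σ R)} (hp : p ∈ (sqfreeIdeal R F).minimalPrimes) :
    ∃ D, IsTransversal F D ∧ p = varIdeal R D := by
  obtain ⟨D, hD, hDp⟩ := exists_isTransversal_varIdeal_le hp.1.1 hp.1.2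
  exact ⟨D, hD,
    le_antisymm (hp.2 ⟨isPrime_varIdeal D, sqfreeIdeal_le_varIdeal_iff.2 hD⟩ hDp) hDp⟩

lemma sqfreeMonomial_mem_symbPow_iff {K : Type} [Field K] {n : ℕ} {F : Set (Finset (Fin n))}
    {A : Finset (Fin n)} {t : ℕ} (ht : t ≠ 0) :
    sqfreeMonomial K A ∈ symbPow K n (sqfreeIdeal K F) t ↔
      ∀ D, IsTransversal F D → t ≤ #(A ∩ D) := by
  rw [symbPow, if_neg (by omega), Int.toNat_natCast]
  simp only [Submodule.mem_iInf]
  constructor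
  · intro h D hD
    have := isPrime_varIdeal (R := K) D
    obtain ⟨p, hp, hpD⟩ :=
      Ideal.exists_minimalPrimes_le (sqfreeIdeal_le_varIdeal_iff (R := K).2 hD)
    obtain ⟨D', -, rfl⟩ := exists_eq_varIdeal_of_mem_minimalPrimes hp
    exact (sqfreeMonomial_mem_varIdeal_pow_iff.1 (h _ hp)).trans
      (card_le_card (inter_subset_inter_left (varIdeal_le_varIdeal_iff.1 hpD)))
  · intro h p hp
    obtain ⟨D, hD, rfl⟩ := exists_eq_varIdeal_of_mem_minimalPrimes hp
    exact sqfreeMonomial_mem_varIdeal_pow_iff.2 (h D hD)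

end Transversal

lemma sqfreePart_eq_sqfreeIdeal {K : Type} [Field K] {n : ℕ}
    (T : Ideal (MvPolynomial (Fin n) K)) :
    sqfreePart K n T = sqfreeIdeal K {A | sqfreeMonomial K A ∈ T} := by
  rw [sqfreePart, sqfreeIdeal]
  congr 1
  ext m
  constructor
  · rintro ⟨hm, A, rfl⟩
    exact ⟨A, hm, rfl⟩
  · rintro ⟨A, hA, rfl⟩
    exact ⟨hA, A, rfl⟩

section Colon

variable [DecidableEq σ] {F : Set (Finset σ)} {E : Finset σ}

/-- The supports of the squarefree monomials in `(I(F)^{t} : x_E)`. -/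
def colonFamily (F : Set (Finset σ)) (E : Finset σ) (t : ℕ) : Set (Finset σ) :=
  {A | ∀ D, IsTransversal F D → t ≤ #((A ∪ E) ∩ D)}

lemma isUpperSet_colonFamily (F : Set (Finset σ)) (E : Finset σ) (t : ℕ) :
    IsUpperSet (colonFamily F E t) :=
  fun _ _ hAB hA D hD => (hA D hD).trans
    (card_le_card (inter_subset_inter_right (union_subset_union_left hAB)))

lemma colonOf_ssp_sqfreeIdeal {K : Type} [Field K] {n : ℕ} (F : Set (Finset (Fin n)))
    (E : Finset (Fin n)) {t : ℕ} (ht : t ≠ 0) :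
    colonOf K n (ssp K n (sqfreeIdeal K F) t) (sqfreeMonomial K E) =
      sqfreeIdeal K (colonFamily F E t) := by
  ext f
  rw [colonOf, Submodule.mem_colon_span_singleton, smul_eq_mul, ssp, sqfreePart_eq_sqfreeIdeal,
    mul_sqfreeMonomial_mem_sqfreeIdeal_iff (isUpperSet_sqfreeMonomial_mem _),
    mem_sqfreeIdeal_iff (isUpperSet_colonFamily ..)]
  exact forall₂_congr fun m _ => sqfreeMonomial_mem_symbPow_iff ht

lemma card_union_inter_eq_add (X E C : Finset σ) :
    #((X ∪ E) ∩ C) = #(X ∩ (C \ E)) + #(C ∩ E) := by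
  rw [← card_union_of_disjoint (disjoint_left.2 fun v hv hv' =>
    (mem_sdiff.1 (mem_inter.1 hv).2).2 (mem_inter.1 hv').2)]
  congr 1
  ext v
  simp only [mem_union, mem_inter, mem_sdiff]
  tauto

lemma isTransversal_colonFamily_two_iff [Fintype σ] (hE : E ∈ F) {D : Finset σ} :
    IsTransversal (colonFamily F E 2) D ↔ ∃ C, IsTransversal F C ∧ #(C ∩ E) = 1 ∧ C \ E ⊆ D := by
  constructor
  · intro hD
    have hcompl : univ \ D ∉ colonFamily F E 2 := fun h => by
      obtain ⟨v, hv⟩ := hD _ h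
      simp at hv
    simp only [colonFamily, Set.mem_ofPred_eq, not_forall, not_le] at hcompl
    obtain ⟨C, hC, hlt⟩ := hcompl
    rw [card_union_inter_eq_add] at hlt
    have hCE := hC.card_inter_pos hE
    refine ⟨C, hC, by omega, fun v hv => ?_⟩
    by_contra hvD
    have hempty : (univ \ D) ∩ (C \ E) = ∅ := card_eq_zero.1 (by omega)
    simpa [hempty] using mem_inter.2 ⟨mem_sdiff.2 ⟨mem_univ v, hvD⟩, hv⟩
  · rintro ⟨C, hC, hCE, hCD⟩ A hA
    have hcount := hA C hC
    rw [card_union_inter_eq_add, hCE] at hcount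
    obtain ⟨v, hv⟩ := card_pos.1 (by omega : 0 < #(A ∩ (C \ E)))
    exact ⟨v, inter_subset_inter_left hCD hv⟩

lemma card_le_card_biUnion_inter {ι : Type*} {T : Finset ι} {e : ι → Finset σ}
    (hT : (T : Set ι).PairwiseDisjoint e) (he : ∀ i ∈ T, e i ∈ F) {C : Finset σ}
    (hC : IsTransversal F C) : #T ≤ #(T.biUnion e ∩ C) := by
  rw [biUnion_inter]
  exact card_le_card_biUnion (hT.mono fun _ => inter_subset_left) fun i hi => hC _ (he i hi)

/-- In ideal terms: `(I(F)^{k+1} : x_E x_M) = ((I(F)^{2} : x_E)^{k} : x_M)` where `M` is the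
union of the edges `e i`, `i ∈ T`, which together with `E` form a matching of `F`. -/
theorem colonFamily_union_biUnion [Fintype σ] (hE : E ∈ F) {ι : Type*} {T : Finset ι}
    {e : ι → Finset σ} (hT : (T : Set ι).PairwiseDisjoint e) (he : ∀ i ∈ T, e i ∈ F)
    (hTE : ∀ i ∈ T, Disjoint (e i) E) {k : ℕ} (hk : k ≤ #T + 1) :
    colonFamily F (E ∪ T.biUnion e) (k + 1) = colonFamily (colonFamily F E 2) (T.biUnion e) k := by
  ext A
  have hunion : A ∪ (E ∪ T.biUnion e) = (A ∪ T.biUnion e) ∪ E := by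
    rw [union_left_comm, union_comm E]
  refine ⟨fun h D hD => ?_, fun h C hC => ?_⟩
  · obtain ⟨C, hC, hCE, hCD⟩ := (isTransversal_colonFamily_two_iff hE).1 hD
    have hcount := h C hC
    rw [hunion, card_union_inter_eq_add, hCE] at hcount
    exact (Nat.le_of_add_le_add_right hcount).trans (card_le_card (inter_subset_inter_left hCD))
  · rw [hunion, card_union_inter_eq_add]
    have hCE := hC.card_inter_pos hE
    by_cases hCE1 : #(C ∩ E) = 1
    · have := h (C \ E) ((isTransversal_colonFamily_two_iff hE).2 ⟨C, hC, hCE1, subset_rfl⟩)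
      omega
    · -- `C` meets `E` twice, and meets every `e i` outside `E`
      have hsub : T.biUnion e ∩ C ⊆ (A ∪ T.biUnion e) ∩ (C \ E) := fun v hv => by
        obtain ⟨hvM, hvC⟩ := mem_inter.1 hv
        obtain ⟨i, hi, hvi⟩ := mem_biUnion.1 hvM
        exact mem_inter.2 ⟨mem_union_right _ hvM, mem_sdiff.2 ⟨hvC, disjoint_left.1 (hTE i hi) hvi⟩⟩
      have := (card_le_card_biUnion_inter hT he hC).trans (card_le_card hsub)
      omega

end Colon

end

end SquarefreeMonomial

section EdgeIdeal

open MvPolynomial Finset SquarefreeMonomial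

def edgeFamily {V : Type*} [DecidableEq V] (G : SimpleGraph V) : Set (Finset V) :=
  {B | ∃ v w, G.Adj v w ∧ B = {v, w}}

variable {K : Type} [Field K] {n : ℕ} {G : SimpleGraph (Fin n)}

lemma edgeIdeal_eq_sqfreeIdeal : edgeIdeal K n G = sqfreeIdeal K (edgeFamily G) := by
  rw [edgeIdeal, sqfreeIdeal]
  congr 1
  ext m
  constructor
  · rintro ⟨v, w, hvw, rfl⟩
    exact ⟨{v, w}, ⟨v, w, hvw, rfl⟩, sqfreeMonomial_pair hvw.ne⟩
  · rintro ⟨_, ⟨v, w, hvw, rfl⟩, rfl⟩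
    exact ⟨v, w, hvw, sqfreeMonomial_pair hvw.ne⟩

variable {s : ℕ} {a b : Fin s → Fin n}

lemma IsMatching.pairwiseDisjoint (hm : IsMatching n G s a b) (T : Set (Fin s)) :
    T.PairwiseDisjoint fun i => ({a i, b i} : Finset (Fin n)) := by
  intro i _ j _ hij
  have := hm.2 i j hij
  have := hm.2 j i (Ne.symm hij)
  simp only [Function.onFun, disjoint_insert_left, disjoint_insert_right, disjoint_singleton,
    mem_insert, mem_singleton]
  tauto

lemma IsMatching.prod_eq_sqfreeMonomial (hm : IsMatching n G s a b) (T : Finset (Fin s)) :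
    ∏ i ∈ T, (X (a i) * X (b i) : MvPolynomial (Fin n) K) =
      sqfreeMonomial K (T.biUnion fun i => {a i, b i}) := by
  rw [sqfreeMonomial, prod_biUnion (hm.pairwiseDisjoint T)]
  exact prod_congr rfl fun i _ => (prod_pair (hm.1 i).ne).symm

end EdgeIdeal

open Finset SquarefreeMonomial

/-- If `1 ≤ s ≤ match(G)` and `u = e_1 ⋯ e_s` is a minimal monomial
generator of `I(G)^[s]` coming from a matching `e_i = a_i b_i`, then
`(I(G)^{s+1} : u) = ((I(G)^{2} : e_1)^{s} : e_2 ⋯ e_s)`. -/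
theorem ssp_colon_matching_generator
    (K : Type) [Field K] (n : ℕ) (G : SimpleGraph (Fin n))
    (s : ℕ) (hs1 : 1 ≤ s)
    (a b : Fin s → Fin n) (hm : IsMatching n G s a b) :
    colonOf K n (ssp K n (edgeIdeal K n G) ((s : ℤ) + 1))
        (∏ i : Fin s, ((X (a i) : MvPolynomial (Fin n) K) * X (b i))) =
      colonOf K n
        (ssp K n
          (colonOf K n (ssp K n (edgeIdeal K n G) 2)
            ((X (a ⟨0, by omega⟩) : MvPolynomial (Fin n) K) * X (b ⟨0, by omega⟩)))
          (s : ℤ))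
        (∏ i ∈ Finset.univ.erase (⟨0, by omega⟩ : Fin s),
          ((X (a i) : MvPolynomial (Fin n) K) * X (b i))) := by
  set i₀ : Fin s := ⟨0, by omega⟩
  let e : Fin s → Finset (Fin n) := fun i => {a i, b i}
  have hsplit : univ.biUnion e = e i₀ ∪ (univ.erase i₀).biUnion e := by
    rw [← biUnion_insert, insert_erase (mem_univ i₀)]
  have hfamily := colonFamily_union_biUnion (F := edgeFamily G) (T := univ.erase i₀) (e := e)
    (k := s) ⟨a i₀, b i₀, hm.1 i₀, rfl⟩ (hm.pairwiseDisjoint _)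
    (fun i _ => ⟨a i, b i, hm.1 i, rfl⟩)
    (fun i hi => hm.pairwiseDisjoint Set.univ trivial trivial (mem_erase.1 hi).1)
    (by simp [card_erase_of_mem]; omega)
  rw [hm.prod_eq_sqfreeMonomial, hm.prod_eq_sqfreeMonomial, hsplit,
    ← sqfreeMonomial_pair (hm.1 i₀).ne, edgeIdeal_eq_sqfreeIdeal,
    show (2 : ℤ) = ((2 : ℕ) : ℤ) from rfl, show (s : ℤ) + 1 = ((s + 1 : ℕ) : ℤ) by push_cast; rfl,
    colonOf_ssp_sqfreeIdeal _ _ two_ne_zero, colonOf_ssp_sqfreeIdeal _ _ (by omega),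
    colonOf_ssp_sqfreeIdeal _ _ (by omega), hfamily]
end

section
/- For any finite simple graph G, the squarefree part of the third symbolic power is contained in the squarefree part of the second ordinary power: I(G)^{3} ⊆ I(G)^[2]. -/
open MvPolynomial

/-! The minimal primes of `I(G)` are the ideals `(x_v : v ∈ C)` for the minimal vertex covers `C`
of `G`, so a squarefree monomial `x_A` in `I(G)^(3)` meets every minimal vertex cover in at least
three vertices. If `A` contained no two disjoint edges, all edges inside `A` would meet one edge
`uv`; then `A \ {u, v}` is independent, a minimal vertex cover avoiding it meets `A` only in
`{u, v}`, a contradiction. Two disjoint edges inside `A` put `x_A` in `I(G)^2`. -/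

open Finset

namespace MvPolynomial

variable {σ R : Type*} [CommRing R] {C : Set σ}

noncomputable def killVars (C : Set σ) : MvPolynomial σ R →ₐ[R] MvPolynomial σ R :=
  aeval (Cᶜ.indicator X)

theorem sub_killVars_mem_span_X_image (p : MvPolynomial σ R) :
    p - killVars C p ∈ Ideal.span (X '' C) := by
  induction p using MvPolynomial.induction_on with
  | C a => simp [killVars]
  | add p q hp hq =>
    rw [map_add, add_sub_add_comm]
    exact add_mem hp hq
  | mul_X p v hp =>
    have hX : X v - killVars C (X v) ∈ Ideal.span (X '' C : Set (MvPolynomial σ R)) := by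
      by_cases hv : v ∈ C
      · simpa [killVars, hv] using Ideal.subset_span (Set.mem_image_of_mem X hv)
      · simp [killVars, hv]
    rw [map_mul, show ∀ a b c d : MvPolynomial σ R, a * b - c * d = (a - c) * b + c * (b - d) by
      intros; ring]
    exact add_mem (Ideal.mul_mem_right _ _ hp) (Ideal.mul_mem_left _ _ hX)

theorem ker_killVars (C : Set σ) :
    RingHom.ker (killVars C : MvPolynomial σ R →ₐ[R] MvPolynomial σ R) =
      Ideal.span (X '' C) := by
  refine le_antisymm (fun p hp => ?_) (Ideal.span_le.mpr ?_)
  · have := sub_killVars_mem_span_X_image (C := C) p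
    rwa [RingHom.mem_ker.mp hp, sub_zero] at this
  · rintro _ ⟨v, hv, rfl⟩
    simp [killVars, hv]

theorem isPrime_span_X_image [IsDomain R] (C : Set σ) :
    (Ideal.span (X '' C : Set (MvPolynomial σ R))).IsPrime := by
  rw [← ker_killVars]
  exact RingHom.ker_isPrime _

theorem X_mem_span_X_image_iff [Nontrivial R] {v : σ} :
    (X v : MvPolynomial σ R) ∈ Ideal.span (X '' C) ↔ v ∈ C := by
  refine ⟨fun h => ?_, fun hv => Ideal.subset_span (Set.mem_image_of_mem X hv)⟩
  obtain ⟨w, hw, hvw⟩ := mem_ideal_span_X_image.mp h (Finsupp.single v 1) (by simp [support_X])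
  rw [Finsupp.single_apply_ne_zero] at hvw
  exact hvw.1 ▸ hw

/-- The substitution `x_v ↦ X` for `v ∈ C`, `x_v ↦ 1` otherwise, maps `x_A` to
`X ^ #(A ∩ C)` and `(x_v : v ∈ C) ^ k` into `(X ^ k)`. -/
theorem le_ncard_of_prod_X_mem_span_X_image_pow [Nontrivial R] {A : Finset σ} {k : ℕ}
    (h : ∏ v ∈ A, X v ∈ Ideal.span (X '' C : Set (MvPolynomial σ R)) ^ k) :
    k ≤ (↑A ∩ C).ncard := by
  classical
  set ψ : MvPolynomial σ R →ₐ[R] Polynomial R := aeval (C.mulIndicator fun _ => Polynomial.X)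
  have hspan : (Ideal.span (X '' C)).map ψ ≤ Ideal.span {Polynomial.X} := by
    rw [Ideal.map_span, Ideal.span_le]
    rintro _ ⟨_, ⟨v, hv, rfl⟩, rfl⟩
    simp [ψ, hv]
  have hprod : ψ (∏ v ∈ A, X v) = Polynomial.X ^ (↑A ∩ C).ncard :=
    calc ψ (∏ v ∈ A, X v) = ∏ v ∈ A with v ∈ C, Polynomial.X := by
          simpa [ψ] using
            prod_mulIndicator_eq_prod_filter A (fun _ _ => Polynomial.X) (fun _ => C) id
      _ = Polynomial.X ^ (↑A ∩ C).ncard := by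
          rw [prod_const, ← Set.ncard_coe_finset, coe_filter]
          rfl
  have hdvd := (Ideal.pow_right_mono hspan k) (Ideal.map_pow ψ _ _ ▸ Ideal.mem_map_of_mem ψ h)
  rw [Ideal.span_singleton_pow, Ideal.mem_span_singleton, hprod] at hdvd
  by_contra! hlt
  simpa using Polynomial.X_pow_dvd_iff.mp hdvd _ hlt

end MvPolynomial

namespace SimpleGraph

variable {V : Type*} {G : SimpleGraph V}

theorem exists_adj_notMem_of_minimal_isVertexCover {C : Set V}
    (hC : Minimal G.IsVertexCover C) {v : V} (hv : v ∈ C) : ∃ w, G.Adj v w ∧ w ∉ C := by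
  by_contra! h
  refine hC.not_prop_of_ssubset (Set.sdiff_singleton_ssubset.mpr hv) fun x y hxy => ?_
  rcases hC.prop hxy with hx | hy
  · by_cases hxv : x = v
    · subst hxv
      exact Or.inr ⟨h y hxy, hxy.ne.symm⟩
    · exact Or.inl ⟨hx, hxv⟩
  · by_cases hyv : y = v
    · subst hyv
      exact Or.inl ⟨h x hxy.symm, hxy.ne⟩
    · exact Or.inr ⟨hy, hyv⟩

theorem IsIndepSet.exists_minimal_isVertexCover_subset_compl [Finite V] {s : Set V}
    (hs : G.IsIndepSet s) : ∃ C ⊆ sᶜ, Minimal G.IsVertexCover C :=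
  exists_minimal_le_of_wellFoundedLT _ _ (isVertexCover_compl.mpr hs)

theorem exists_card_le_two_isIndepSet_sdiff [DecidableEq V] (A : Finset V)
    (hA : ¬∃ u v w z, G.Adj u v ∧ G.Adj w z ∧ Disjoint ({u, v} : Finset V) {w, z} ∧
      {u, v} ∪ {w, z} ⊆ A) :
    ∃ B : Finset V, #B ≤ 2 ∧ G.IsIndepSet ↑(A \ B) := by
  by_cases hE : ∃ u v, G.Adj u v ∧ ({u, v} : Finset V) ⊆ A
  · obtain ⟨u, v, huv, huvA⟩ := hE
    refine ⟨{u, v}, card_le_two, fun x hx y hy _ hxy => hA ⟨u, v, x, y, huv, hxy, ?_, ?_⟩⟩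
    all_goals rw [mem_coe, mem_sdiff] at hx hy
    · simp only [disjoint_insert_right, disjoint_singleton_right]
      exact ⟨hx.2, hy.2⟩
    · exact union_subset huvA (insert_subset_iff.mpr ⟨hx.1, singleton_subset_iff.mpr hy.1⟩)
  · refine ⟨∅, by simp, fun x hx y hy _ hxy => hE ⟨x, y, hxy, ?_⟩⟩
    rw [sdiff_empty, mem_coe] at hx hy
    exact insert_subset_iff.mpr ⟨hx, singleton_subset_iff.mpr hy⟩

theorem exists_disjoint_edges_of_forall_minimal_isVertexCover [Finite V] [DecidableEq V]
    {A : Finset V} (hA : ∀ C, Minimal G.IsVertexCover C → 3 ≤ (↑A ∩ C).ncard) :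
    ∃ u v w z, G.Adj u v ∧ G.Adj w z ∧ Disjoint ({u, v} : Finset V) {w, z} ∧
      {u, v} ∪ {w, z} ⊆ A := by
  by_contra h
  obtain ⟨B, hB, hind⟩ := exists_card_le_two_isIndepSet_sdiff A h
  obtain ⟨C, hCsub, hC⟩ := hind.exists_minimal_isVertexCover_subset_compl
  have hAC : ↑A ∩ C ⊆ ↑B := fun x ⟨hxA, hxC⟩ => by
    by_contra hxB
    exact hCsub hxC (mem_coe.mpr (mem_sdiff.mpr ⟨hxA, hxB⟩))
  have := (Set.ncard_le_ncard hAC B.finite_toSet).trans_eq (Set.ncard_coe_finset B)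
  linarith [hA C hC]

end SimpleGraph

section EdgeIdeal

variable {K : Type} [Field K] {n : ℕ} {G : SimpleGraph (Fin n)}

theorem symbPow_le_pow_of_mem_minimalPrimes {I p : Ideal (MvPolynomial (Fin n) K)} {s : ℤ}
    (hs : 0 < s) (hp : p ∈ I.minimalPrimes) : symbPow K n I s ≤ p ^ s.toNat := by
  rw [symbPow, if_neg hs.not_ge]
  exact iInf₂_le p hp

theorem X_mul_X_mem_edgeIdeal {v w : Fin n} (h : G.Adj v w) :
    (X v * X w : MvPolynomial (Fin n) K) ∈ edgeIdeal K n G :=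
  Ideal.subset_span ⟨v, w, h, rfl⟩

theorem edgeIdeal_le_span_X_image {C : Set (Fin n)} (hC : G.IsVertexCover C) :
    edgeIdeal K n G ≤ Ideal.span (X '' C) := by
  refine Ideal.span_le.mpr ?_
  rintro _ ⟨v, w, hvw, rfl⟩
  rcases hC hvw with hv | hw
  · exact Ideal.mul_mem_right _ _ (X_mem_span_X_image_iff.mpr hv)
  · exact Ideal.mul_mem_left _ _ (X_mem_span_X_image_iff.mpr hw)

theorem span_X_image_mem_minimalPrimes_edgeIdeal {C : Set (Fin n)}
    (hC : Minimal G.IsVertexCover C) :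
    Ideal.span (X '' C) ∈ (edgeIdeal K n G).minimalPrimes := by
  refine ⟨⟨isPrime_span_X_image C, edgeIdeal_le_span_X_image hC.prop⟩,
    fun q ⟨hq, hIq⟩ hqC => Ideal.span_le.mpr ?_⟩
  rintro _ ⟨v, hv, rfl⟩
  obtain ⟨w, hvw, hw⟩ := SimpleGraph.exists_adj_notMem_of_minimal_isVertexCover hC hv
  exact (hq.mem_or_mem (hIq (X_mul_X_mem_edgeIdeal hvw))).resolve_right
    fun hwq => hw (X_mem_span_X_image_iff.mp (hqC hwq))

theorem prod_X_mem_edgeIdeal_sq {A : Finset (Fin n)} {u v w z : Fin n}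
    (huv : G.Adj u v) (hwz : G.Adj w z) (hdisj : Disjoint ({u, v} : Finset (Fin n)) {w, z})
    (hA : {u, v} ∪ {w, z} ⊆ A) :
    ∏ x ∈ A, (X x : MvPolynomial (Fin n) K) ∈ edgeIdeal K n G ^ 2 := by
  refine Ideal.mem_of_dvd _ (Finset.prod_dvd_prod_of_subset _ _ X hA) ?_
  rw [Finset.prod_union hdisj, Finset.prod_pair huv.ne, Finset.prod_pair hwz.ne, sq]
  exact Ideal.mul_mem_mul (X_mul_X_mem_edgeIdeal huv) (X_mul_X_mem_edgeIdeal hwz)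

end EdgeIdeal

/-- For any graph `G`, `I(G)^{3} ⊆ I(G)^[2]`. -/
theorem ssp_three_le_sqPow_two
    (K : Type) [Field K] (n : ℕ) (G : SimpleGraph (Fin n)) :
    ssp K n (edgeIdeal K n G) 3 ≤ sqPow K n (edgeIdeal K n G) 2 := by
  refine Ideal.span_le.mpr ?_
  rintro _ ⟨hmem, A, rfl⟩
  refine Ideal.subset_span ⟨?_, A, rfl⟩
  have hcover : ∀ C, Minimal G.IsVertexCover C → 3 ≤ (↑A ∩ C).ncard := fun C hC =>
    MvPolynomial.le_ncard_of_prod_X_mem_span_X_image_pow <|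
      symbPow_le_pow_of_mem_minimalPrimes (by norm_num)
        (span_X_image_mem_minimalPrimes_edgeIdeal hC) hmem
  obtain ⟨u, v, w, z, huv, hwz, hdisj, hsub⟩ :=
    SimpleGraph.exists_disjoint_edges_of_forall_minimal_isVertexCover hcover
  exact prod_X_mem_edgeIdeal_sq huv hwz hdisj hsub
end
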